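/- In the increasing flip graph of a subword complex SC(Q,ρ), there is at most one path between any two facets I and J along which the sequence of positions flipped out is strictly increasing. If it exists, its label sequence is lexicographically smallest among label sequences of all directed paths from I to J. -/

import Mathlib

open scoped Classical

/-- Directed walks in a graph `E`, recorded by the list of vertices after the start. -/
inductive DWalk {α : Type*} (E : α → α → Prop) : α → α → List α → Prop
  | nil (u : α) : DWalk E u u []
  | cons {u w v : α} {l : List α} : E u w → DWalk E w v l → DWalk E u v (w :: l)

/-- The sequence of edge labels along a walk from `u` with vertex list `l`. -/
def wLabels {α : Type*} (lab : α → α → ℕ) (u : α) (l : List α) : List ℕ :=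
  List.zipWith lab (u :: l) l

/-- A facet of the subword complex `SC(Q, ρ)`: a set of positions whose complement is
a reduced expression for `ρ` as a subword of `Q`. -/
def IsSCFacet {B W : Type*} [Group W] {M : CoxeterMatrix B} (cs : CoxeterSystem M W)
    {m : ℕ} (Q : Fin m → B) (ρ : W) (I : Finset (Fin m)) : Prop :=
  cs.wordProd ((Iᶜ.sort (· ≤ ·)).map Q) = ρ ∧ Iᶜ.card = cs.length ρ

/-- The edges of the increasing flip graph: `I → J` whenever `I∖{i} = J∖{j}` with
`i < j`. -/
def FlipEdge {B W : Type*} [Group W] {M : CoxeterMatrix B} (cs : CoxeterSystem M W)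
    {m : ℕ} (Q : Fin m → B) (ρ : W) (I J : Finset (Fin m)) : Prop :=
  IsSCFacet cs Q ρ I ∧ IsSCFacet cs Q ρ J ∧
    ∃ i ∈ I, ∃ j ∈ J, i < j ∧ I.erase i = J.erase j

/-- The positive edge label of a flip `I → J`: the position flipped out,
i.e. the unique element of `I ∖ J`. -/
def pLab {m : ℕ} (I J : Finset (Fin m)) : ℕ := (I \ J).sup Fin.val

/-- The negative edge label of a flip `I → J`: the position flipped in,
i.e. the unique element of `J ∖ I`. -/
def nLab {m : ℕ} (I J : Finset (Fin m)) : ℕ := (J \ I).sup Fin.val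

/-!
A ridge of a subword complex lies in at most two facets: three letters of a word of length
`ℓ ρ + 1` whose deletion all yield `ρ` would repeat a left inversion of a reduced word. Hence a
flip out of a facet is determined by its label. Along any walk from `I` to `J` the smallest
label is a position of `I ∖ J`, whereas a rising walk flips out every position of `I ∖ J` at or
after its first step. So the first label of a rising walk is at most that of any other walk,
with equality only if the first flips agree; induction gives lexicographic minimality, and
uniqueness follows from the asymmetry of the lexicographic order.
-/

namespace CoxeterSystem

variable {B W : Type*} [Group W] {M : CoxeterMatrix B} (cs : CoxeterSystem M W)

/-- Deleting letter `k` multiplies `π ω` on the left by the `k`-th left inversion, and the left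
inversions before `c` do not see the deletion of letter `c`. -/
theorem wordProd_eraseIdx_ne_of_isReduced {ω : List B} {a b c : ℕ}
    (hred : cs.IsReduced (ω.eraseIdx c)) (hab : a ≠ b) (hac : a < c) (hbc : b < c)
    (hc : c < ω.length) :
    cs.wordProd (ω.eraseIdx a) ≠ cs.wordProd (ω.eraseIdx b) := by
  intro h
  rw [← cs.getD_leftInvSeq_mul_wordProd, ← cs.getD_leftInvSeq_mul_wordProd] at h
  have hinv := mul_right_cancel h
  have htake : (cs.leftInvSeq (ω.eraseIdx c)).take c = (cs.leftInvSeq ω).take c := by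
    rw [← leftInvSeq_take, ← leftInvSeq_take, List.take_eraseIdx_eq_take_of_le _ _ _ le_rfl]
  have hnodup : ((cs.leftInvSeq ω).take c).Nodup := htake ▸ hred.nodup_leftInvSeq.sublist
    (List.take_sublist _ _)
  rw [List.getD_eq_getElem _ _ (by simp; omega), List.getD_eq_getElem _ _ (by simp; omega)] at hinv
  have hinv' : ((cs.leftInvSeq ω).take c)[a]'(by simp; omega) =
      ((cs.leftInvSeq ω).take c)[b]'(by simp; omega) := by
    simpa only [List.getElem_take] using hinv
  exact hab (hnodup.getElem_inj_iff.mp hinv')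

theorem card_filter_wordProd_eraseIdx_eq_le_two (ω : List B) (ρ : W)
    (hlen : ω.length = cs.length ρ + 1) :
    ((Finset.range ω.length).filter fun k => cs.wordProd (ω.eraseIdx k) = ρ).card ≤ 2 := by
  set S := (Finset.range ω.length).filter fun k => cs.wordProd (ω.eraseIdx k) = ρ
  by_contra! hS
  have hne : S.Nonempty := Finset.card_pos.mp (by omega)
  set c := S.max' hne
  have hcS : c ∈ S := S.max'_mem hne
  have hlt : ∀ k ∈ S.erase c, k < c := fun k hk =>
    lt_of_le_of_ne (S.le_max' k (Finset.mem_of_mem_erase hk)) (Finset.ne_of_mem_erase hk)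
  obtain ⟨a, ha, b, hb, hab⟩ := Finset.one_lt_card.mp
    (by rw [Finset.card_erase_of_mem hcS]; omega : 1 < (S.erase c).card)
  have hc : c < ω.length := Finset.mem_range.mp (Finset.mem_filter.mp hcS).1
  have hred : cs.IsReduced (ω.eraseIdx c) := by
    rw [IsReduced, (Finset.mem_filter.mp hcS).2, List.length_eraseIdx_of_lt hc, hlen]; rfl
  refine cs.wordProd_eraseIdx_ne_of_isReduced hred hab (hlt a ha) (hlt b hb) hc ?_
  rw [(Finset.mem_filter.mp (Finset.mem_of_mem_erase ha)).2,
    (Finset.mem_filter.mp (Finset.mem_of_mem_erase hb)).2]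

end CoxeterSystem

theorem Finset.sort_erase {α : Type*} [LinearOrder α] (s : Finset α) (x : α) :
    (s.erase x).sort (· ≤ ·) = (s.sort (· ≤ ·)).erase x :=
  List.Perm.eq_of_pairwise' (Finset.pairwise_sort _ _)
    ((Finset.pairwise_sort s _).sublist List.erase_sublist)
    (by rw [← Multiset.coe_eq_coe, ← Multiset.coe_erase, Finset.sort_eq, Finset.sort_eq,
      Finset.erase_val])

def IsIncFlip {m : ℕ} (I J : Finset (Fin m)) : Prop :=
  ∃ i ∈ I, ∃ j ∉ I, i < j ∧ J = insert j (I.erase i)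

theorem pLab_insert_erase {m : ℕ} {I : Finset (Fin m)} {i j : Fin m}
    (hi : i ∈ I) (hj : j ∉ I) : pLab I (insert j (I.erase i)) = i := by
  have hdiff : I \ insert j (I.erase i) = {i} := by
    ext x
    by_cases hxi : x = i
    · subst hxi; simp [hi, ne_of_mem_of_not_mem hi hj]
    · simp +contextual [hxi]
  rw [pLab, hdiff, Finset.sup_singleton]

section Facets

variable {B W : Type*} [Group W] {M : CoxeterMatrix B} (cs : CoxeterSystem M W)
  {m : ℕ} (Q : Fin m → B) (ρ : W)

theorem card_filter_isSCFacet_insert_le_two (R : Finset (Fin m)) :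
    (Rᶜ.filter fun x => IsSCFacet cs Q ρ (insert x R)).card ≤ 2 := by
  set L := Rᶜ.sort (· ≤ ·)
  have hword : ∀ x,
      ((insert x R)ᶜ.sort (· ≤ ·)).map Q = (L.map Q).eraseIdx (L.idxOf x) := by
    intro x
    rw [Finset.compl_insert, Finset.sort_erase, List.erase_eq_eraseIdx_of_idxOf rfl,
      List.eraseIdx_map]
  rcases (Rᶜ.filter fun x => IsSCFacet cs Q ρ (insert x R)).eq_empty_or_nonempty
    with h | ⟨x₀, hx₀⟩
  · simp [h]
  obtain ⟨hx₀R, -, hcard⟩ := Finset.mem_filter.mp hx₀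
  have hlen : (L.map Q).length = cs.length ρ + 1 := by
    rw [List.length_map, Finset.length_sort, ← hcard, Finset.compl_insert,
      Finset.card_erase_add_one hx₀R]
  refine (Finset.card_le_card_of_injOn (fun x => L.idxOf x) ?_ ?_).trans
    (cs.card_filter_wordProd_eraseIdx_eq_le_two (L.map Q) ρ hlen)
  · intro x hx
    obtain ⟨hxR, hfacet, -⟩ := Finset.mem_filter.mp hx
    refine Finset.mem_filter.mpr ⟨?_, hword x ▸ hfacet⟩
    rw [Finset.mem_range, List.length_map]
    exact List.idxOf_lt_length_of_mem ((Finset.mem_sort _).mpr hxR)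
  · intro x hx y _ hxy
    exact (List.idxOf_inj ((Finset.mem_sort _).mpr (Finset.mem_filter.mp hx).1)).mp hxy

variable {cs Q ρ}

theorem eq_of_isSCFacet_insert {R : Finset (Fin m)} {i j j' : Fin m}
    (hi : IsSCFacet cs Q ρ (insert i R)) (hj : IsSCFacet cs Q ρ (insert j R))
    (hj' : IsSCFacet cs Q ρ (insert j' R)) (hiR : i ∉ R) (hjR : j ∉ R) (hj'R : j' ∉ R)
    (hij : i ≠ j) (hij' : i ≠ j') : j = j' := by
  by_contra hjj'
  have hsub : {i, j, j'} ⊆ Rᶜ.filter fun x => IsSCFacet cs Q ρ (insert x R) := by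
    intro x hx
    simp only [Finset.mem_insert, Finset.mem_singleton] at hx
    rcases hx with rfl | rfl | rfl <;> simp [*]
  have h3 : ({i, j, j'} : Finset (Fin m)).card = 3 :=
    Finset.card_eq_three.mpr ⟨i, j, j', hij, hij', hjj', rfl⟩
  have := (Finset.card_le_card hsub).trans (card_filter_isSCFacet_insert_le_two cs Q ρ R)
  omega

theorem FlipEdge.isIncFlip {I J : Finset (Fin m)} (h : FlipEdge cs Q ρ I J) : IsIncFlip I J := by
  obtain ⟨-, -, i, hi, j, hj, hij, he⟩ := h
  refine ⟨i, hi, j, fun hjI => ?_, hij, ?_⟩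
  · have : j ∈ J.erase j := he ▸ Finset.mem_erase.mpr ⟨hij.ne', hjI⟩
    simp at this
  · rw [he, Finset.insert_erase hj]

theorem FlipEdge.eq_of_pLab_eq {I J J' : Finset (Fin m)} (h : FlipEdge cs Q ρ I J)
    (h' : FlipEdge cs Q ρ I J') (hlab : pLab I J = pLab I J') : J = J' := by
  obtain ⟨i, hi, j, hj, -, rfl⟩ := h.isIncFlip
  obtain ⟨i', hi', j', hj', -, rfl⟩ := h'.isIncFlip
  obtain rfl : i = i' :=
    Fin.ext (by rwa [pLab_insert_erase hi hj, pLab_insert_erase hi' hj'] at hlab)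
  have hI : IsSCFacet cs Q ρ (insert i (I.erase i)) := by rw [Finset.insert_erase hi]; exact h.1
  rw [eq_of_isSCFacet_insert hI h.2.1 h'.2.1 (by simp) (by simp [hj]) (by simp [hj'])
    (ne_of_mem_of_not_mem hi hj) (ne_of_mem_of_not_mem hi hj')]

end Facets

@[simp]
theorem wLabels_cons {α : Type*} (lab : α → α → ℕ) (u w : α) (l : List α) :
    wLabels lab u (w :: l) = lab u w :: wLabels lab w l := rfl

namespace DWalk

theorem mono {α : Type*} {E E' : α → α → Prop} (hE : ∀ u v, E u v → E' u v) {u v : α}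
    {l : List α} (hw : DWalk E u v l) : DWalk E' u v l := by
  induction hw with
  | nil u => exact nil u
  | cons he _ ih => exact cons (hE _ _ he) ih

variable {m : ℕ} {K J : Finset (Fin m)} {l : List (Finset (Fin m))}

theorem val_mem_wLabels_of_mem_of_notMem (hw : DWalk IsIncFlip K J l) {x : Fin m}
    (hxK : x ∈ K) (hxJ : x ∉ J) : (x : ℕ) ∈ wLabels pLab K l := by
  induction hw with
  | nil u => exact absurd hxK hxJ
  | cons he _ ih =>
    obtain ⟨i, hi, j, hj, -, rfl⟩ := he
    rw [wLabels_cons, pLab_insert_erase hi hj]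
    by_cases hxi : x = i
    · rw [hxi]; exact List.mem_cons_self
    · exact List.mem_cons_of_mem _ (ih (by simp [hxi, hxK]) hxJ)

theorem exists_mem_wLabels_lt_of_notMem_of_mem (hw : DWalk IsIncFlip K J l) {x : Fin m}
    (hxK : x ∉ K) (hxJ : x ∈ J) : ∃ a ∈ wLabels pLab K l, a < x := by
  induction hw with
  | nil u => exact absurd hxJ hxK
  | @cons u w _ _ he _ ih =>
    obtain ⟨i, hi, j, hj, hij, rfl⟩ := he
    rw [wLabels_cons, pLab_insert_erase hi hj]
    by_cases hxw : x ∈ insert j (u.erase i)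
    · have hxj : x = j := by simpa [hxK] using hxw
      exact ⟨i, List.mem_cons_self, hxj ▸ hij⟩
    · obtain ⟨a, ha, hax⟩ := ih hxw hxJ
      exact ⟨a, List.mem_cons_of_mem _ ha, hax⟩

theorem exists_mem_notMem_forall_le_wLabels (hw : DWalk IsIncFlip K J l) (hl : l ≠ []) :
    ∃ x ∈ K, x ∉ J ∧ ∀ a ∈ wLabels pLab K l, (x : ℕ) ≤ a := by
  induction hw with
  | nil u => exact absurd rfl hl
  | @cons u w v t he hw ih =>
    obtain ⟨i, hi, j, hj, hij, rfl⟩ := he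
    simp only [wLabels_cons, pLab_insert_erase hi hj, List.mem_cons, forall_eq_or_imp]
    rcases eq_or_ne t [] with rfl | ht
    · cases hw
      exact ⟨i, hi, by simp [hij.ne], le_rfl, fun _ ha => absurd ha List.not_mem_nil⟩
    obtain ⟨y, hyw, hyv, hymin⟩ := ih ht
    by_cases hiy : (i : ℕ) ≤ y
    · refine ⟨i, hi, fun hiv => ?_, le_rfl, fun a ha => hiy.trans (hymin a ha)⟩
      obtain ⟨a, ha, hai⟩ := hw.exists_mem_wLabels_lt_of_notMem_of_mem (by simp [hij.ne]) hiv
      exact absurd (hiy.trans (hymin a ha)) (not_le.mpr hai)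
    · have hyj : y ≠ j := fun hyj => hiy (hyj ▸ hij.le)
      have hyu : y ∈ u := (Finset.mem_erase.mp ((Finset.mem_insert.mp hyw).resolve_left hyj)).2
      exact ⟨y, hyu, hyv, (not_le.mp hiy).le, hymin⟩

end DWalk

section RisingWalks

variable {B W : Type*} [Group W] {M : CoxeterMatrix B} {cs : CoxeterSystem M W}
  {m : ℕ} {Q : Fin m → B} {ρ : W}

theorem lex_wLabels_or_eq_of_isChain {K J : Finset (Fin m)} {l l' : List (Finset (Fin m))}
    (hw : DWalk (FlipEdge cs Q ρ) K J l) (hc : List.IsChain (· < ·) (wLabels pLab K l))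
    (hw' : DWalk (FlipEdge cs Q ρ) K J l') :
    List.Lex (· < ·) (wLabels pLab K l) (wLabels pLab K l') ∨ l = l' := by
  induction hw generalizing l' with
  | nil u =>
    cases hw' with
    | nil => exact Or.inr rfl
    | cons => exact Or.inl List.Lex.nil
  | @cons u w v t he hw ih =>
    have hwalk := (DWalk.cons he hw).mono fun _ _ => FlipEdge.isIncFlip
    cases hw' with
    | nil =>
      obtain ⟨x, hxu, hxu', -⟩ :=
        hwalk.exists_mem_notMem_forall_le_wLabels (List.cons_ne_nil _ _)
      exact absurd hxu hxu'
    | @cons _ w' _ t' he' hw' =>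
      obtain ⟨x, hxu, hxv, hxmin⟩ := (DWalk.cons he' hw').mono (fun _ _ => FlipEdge.isIncFlip)
        |>.exists_mem_notMem_forall_le_wLabels (List.cons_ne_nil _ _)
      have hfirst : pLab u w ≤ x := by
        have hmem := hwalk.val_mem_wLabels_of_mem_of_notMem hxu hxv
        rw [wLabels_cons] at hc hmem
        rcases List.mem_cons.mp hmem with h | h
        · exact h.ge
        · exact (List.rel_of_pairwise_cons (List.isChain_iff_pairwise.mp hc) h).le
      rcases (hfirst.trans (hxmin _ List.mem_cons_self)).lt_or_eq with hlt | heq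
      · exact Or.inl (List.Lex.rel hlt)
      · obtain rfl := he.eq_of_pLab_eq he' heq
        rw [wLabels_cons] at hc
        exact (ih hc.tail hw').imp List.Lex.cons (congrArg _)

end RisingWalks

theorem rising_path_unique_and_lex_first_general {B W : Type*} [Group W]
    {M : CoxeterMatrix B} (cs : CoxeterSystem M W)
    {m : ℕ} (Q : Fin m → B) (ρ : W) :
    ∀ I J : Finset (Fin m),
      (∀ l l' : List (Finset (Fin m)),
        DWalk (FlipEdge cs Q ρ) I J l → List.Chain' (· < ·) (wLabels pLab I l) →
        DWalk (FlipEdge cs Q ρ) I J l' → List.Chain' (· < ·) (wLabels pLab I l') →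
          l = l') ∧
      (∀ l : List (Finset (Fin m)),
        DWalk (FlipEdge cs Q ρ) I J l → List.Chain' (· < ·) (wLabels pLab I l) →
        ∀ l' : List (Finset (Fin m)), DWalk (FlipEdge cs Q ρ) I J l' →
          List.Lex (· < ·) (wLabels pLab I l) (wLabels pLab I l') ∨
            wLabels pLab I l = wLabels pLab I l') := by
  intro I J
  refine ⟨fun l l' hw hc hw' hc' => ?_, fun l hw hc l' hw' => ?_⟩
  · rcases lex_wLabels_or_eq_of_isChain hw hc hw' with hlt | rfl
    · rcases lex_wLabels_or_eq_of_isChain hw' hc' hw with hgt | rfl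
      · exact absurd hgt (asymm hlt)
      · rfl
    · rfl
  · exact (lex_wLabels_or_eq_of_isChain hw hc hw').imp_right (congrArg _)

/-- In the increasing flip graph there is at most one rising path between two facets,
and if it exists its label sequence is lexicographically smallest among label sequences
of all directed paths. -/
theorem rising_path_unique_and_lex_first {B W : Type*} [Group W] [Finite W]
    {M : CoxeterMatrix B} (cs : CoxeterSystem M W)
    {m : ℕ} (Q : Fin m → B) (ρ : W) :
    ∀ I J : Finset (Fin m),
      (∀ l l' : List (Finset (Fin m)),
        DWalk (FlipEdge cs Q ρ) I J l → List.Chain' (· < ·) (wLabels pLab I l) →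
        DWalk (FlipEdge cs Q ρ) I J l' → List.Chain' (· < ·) (wLabels pLab I l') →
          l = l') ∧
      (∀ l : List (Finset (Fin m)),
        DWalk (FlipEdge cs Q ρ) I J l → List.Chain' (· < ·) (wLabels pLab I l) →
        ∀ l' : List (Finset (Fin m)), DWalk (FlipEdge cs Q ρ) I J l' →
          List.Lex (· < ·) (wLabels pLab I l) (wLabels pLab I l') ∨
            wLabels pLab I l = wLabels pLab I l') :=
  rising_path_unique_and_lex_first_general cs Q ρ
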